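/- Define φ(n) = nα + (l−1)^l for (l−1)^{l−1} ≤ n < l^l (l ≥ 2), with α > 0 fixed. Then liminf_{n→∞} φ(n)/n = α + 1/e and limsup_{n→∞} φ(n)/n = ∞. -/
import Mathlib

open Filter

private lemma exL (n : ℕ) : ∃ l, 2 ≤ l ∧ n < l ^ l :=
  ⟨n + 2, by omega, lt_of_lt_of_le (by omega) (Nat.le_self_pow (by omega) _)⟩

noncomputable def Lfun (n : ℕ) : ℕ := Nat.find (exL n)

lemma Lfun_two (n : ℕ) : 2 ≤ Lfun n := (Nat.find_spec (exL n)).1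

lemma Lfun_lt (n : ℕ) : n < Lfun n ^ Lfun n := (Nat.find_spec (exL n)).2

lemma Lfun_lower {n : ℕ} (hn : 1 ≤ n) : (Lfun n - 1) ^ (Lfun n - 1) ≤ n := by
  rcases Nat.lt_or_ge (Lfun n) 3 with h | h
  · have h2 := Lfun_two n
    have : Lfun n = 2 := by omega
    simpa [this] using hn
  · by_contra hcon
    push_neg at hcon
    have := Nat.find_min (exL n) (show Lfun n - 1 < Lfun n by omega)
    exact this ⟨by omega, hcon⟩

lemma pow_self_mono {a b : ℕ} (h : a ≤ b) : a ^ a ≤ b ^ b := by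
  rcases Nat.eq_zero_or_pos b with hb | hb
  · subst hb
    simp_all
  · exact le_trans (Nat.pow_le_pow_left h a) (Nat.pow_le_pow_right hb h)

lemma Lfun_tendsto : Tendsto Lfun atTop atTop := by
  apply tendsto_atTop_atTop.mpr
  intro b
  refine ⟨(b + 1) ^ (b + 1), fun n hn => ?_⟩
  by_contra hcon
  push_neg at hcon
  have h1 : Lfun n ^ Lfun n ≤ (b + 1) ^ (b + 1) := pow_self_mono (by omega)
  have := Lfun_lt n
  omega

lemma g_tendsto :
    Tendsto (fun l : ℕ => ((l - 1 : ℕ) : ℝ) ^ l / (l : ℝ) ^ l) atTop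
      (nhds (Real.exp 1)⁻¹) := by
  rw [← Real.exp_neg]
  refine (Real.tendsto_one_add_div_pow_exp (-1)).congr' ?_
  filter_upwards [eventually_ge_atTop 1] with l hl
  have hl0 : (l : ℝ) ≠ 0 := by positivity
  rw [Nat.cast_sub hl, Nat.cast_one, ← div_pow]
  congr 1
  field_simp
  ring

theorem stmt_18 (α : ℝ) (hα : 0 < α) (φ : ℕ → ℝ)
    (hφ : ∀ l : ℕ, 2 ≤ l → ∀ n : ℕ, (l - 1) ^ (l - 1) ≤ n → n < l ^ l →
      φ n = (n : ℝ) * α + ((l - 1 : ℕ) : ℝ) ^ l) :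
    Filter.liminf (fun n => ((φ n / n : ℝ) : EReal)) atTop
      = ((α + (Real.exp 1)⁻¹ : ℝ) : EReal) ∧
    Filter.limsup (fun n => ((φ n / n : ℝ) : EReal)) atTop = (⊤ : EReal) := by
  have hblock : ∀ l : ℕ, 2 ≤ l → (l - 1) ^ (l - 1) < l ^ l := fun l hl =>
    lt_of_le_of_lt (Nat.pow_le_pow_right (by omega) (by omega))
      (Nat.pow_lt_pow_left (by omega) (by omega))
  constructor
  · -- liminf
    apply le_antisymm
    · -- liminf ≤ α + e⁻¹ via subsequence n = l^l - 1
      set s : ℕ → ℕ := fun l => l ^ l - 1 with hs_def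
      have hs : Tendsto s atTop atTop := by
        apply tendsto_atTop_atTop.mpr
        intro b
        refine ⟨b + 1, fun l hl => ?_⟩
        have := Nat.le_self_pow (show l ≠ 0 by omega) l
        show b ≤ l ^ l - 1
        omega
      have hDlim : Tendsto (fun l : ℕ => ((l : ℝ) ^ l)) atTop atTop := by
        apply tendsto_atTop_mono' _ (eventually_atTop.mpr ⟨1, fun l hl => ?_⟩)
          tendsto_natCast_atTop_atTop
        exact le_self_pow₀ (by exact_mod_cast hl) (by omega)
      have hr : Tendsto (fun l : ℕ => α + ((l - 1 : ℕ) : ℝ) ^ l / ((l ^ l - 1 : ℕ) : ℝ))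
          atTop (nhds (α + (Real.exp 1)⁻¹)) := by
        apply Tendsto.const_add
        have hinv : Tendsto (fun l : ℕ => ((l : ℝ) ^ l)⁻¹) atTop (nhds 0) :=
          hDlim.inv_tendsto_atTop
        have hmain : Tendsto
            (fun l : ℕ => (((l - 1 : ℕ) : ℝ) ^ l / (l : ℝ) ^ l) / (1 - ((l : ℝ) ^ l)⁻¹))
            atTop (nhds ((Real.exp 1)⁻¹ / (1 - 0))) :=
          g_tendsto.div (tendsto_const_nhds.sub hinv) (by norm_num)
        rw [sub_zero, div_one] at hmain
        refine hmain.congr' ?_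
        filter_upwards [eventually_ge_atTop 2] with l hl
        have h1 : 1 ≤ l ^ l := Nat.one_le_iff_ne_zero.mpr (pow_ne_zero _ (by omega))
        have hD4 : (4 : ℝ) ≤ (l : ℝ) ^ l := by
          have : (4 : ℕ) ≤ l ^ l := le_trans (by norm_num) (pow_self_mono hl)
          exact_mod_cast this
        have hD0 : (l : ℝ) ^ l ≠ 0 := by linarith
        have hD1 : (l : ℝ) ^ l - 1 ≠ 0 := by linarith
        rw [Nat.cast_sub h1, Nat.cast_one, Nat.cast_pow]
        field_simp
      have hcomp : Tendsto (fun l => ((φ (s l) / (s l) : ℝ) : EReal)) atTop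
          (nhds ((α + (Real.exp 1)⁻¹ : ℝ) : EReal)) := by
        rw [EReal.tendsto_coe]
        refine hr.congr' ?_
        filter_upwards [eventually_ge_atTop 2] with l hl
        have hb := hblock l hl
        have h1 : (l - 1) ^ (l - 1) ≤ s l := by show (l - 1) ^ (l - 1) ≤ l ^ l - 1; omega
        have h2 : s l < l ^ l := by
          show l ^ l - 1 < l ^ l
          have : 1 ≤ l ^ l := Nat.one_le_iff_ne_zero.mpr (pow_ne_zero _ (by omega))
          omega
        have h4 : 4 ≤ l ^ l := le_trans (by norm_num) (pow_self_mono hl)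
        have hsl0 : (s l : ℝ) ≠ 0 := by
          have h5 : 1 ≤ s l := by show 1 ≤ l ^ l - 1; omega
          exact_mod_cast Nat.one_le_iff_ne_zero.mp h5
        rw [hφ l hl (s l) h1 h2, add_div, mul_div_cancel_left₀ _ hsl0]
      calc liminf (fun n => ((φ n / n : ℝ) : EReal)) atTop
          ≤ liminf (fun n => ((φ n / n : ℝ) : EReal)) (map s atTop) :=
            liminf_le_liminf_of_le hs
        _ = liminf (fun l => ((φ (s l) / (s l) : ℝ) : EReal)) atTop :=
            (liminf_comp _ _ _).symm
        _ = ((α + (Real.exp 1)⁻¹ : ℝ) : EReal) := hcomp.liminf_eq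
    · -- α + e⁻¹ ≤ liminf
      have hgl : Tendsto (fun n => α + ((Lfun n - 1 : ℕ) : ℝ) ^ (Lfun n) / (Lfun n : ℝ) ^ (Lfun n))
          atTop (nhds (α + (Real.exp 1)⁻¹)) :=
        Tendsto.const_add _ (g_tendsto.comp Lfun_tendsto)
      have hlowlim : Tendsto
          (fun n => (((α + ((Lfun n - 1 : ℕ) : ℝ) ^ (Lfun n) / (Lfun n : ℝ) ^ (Lfun n)) : ℝ) : EReal))
          atTop (nhds ((α + (Real.exp 1)⁻¹ : ℝ) : EReal)) := EReal.tendsto_coe.mpr hgl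
      calc ((α + (Real.exp 1)⁻¹ : ℝ) : EReal)
          = liminf (fun n => (((α + ((Lfun n - 1 : ℕ) : ℝ) ^ (Lfun n) / (Lfun n : ℝ) ^ (Lfun n)) : ℝ) : EReal)) atTop :=
            hlowlim.liminf_eq.symm
        _ ≤ liminf (fun n => ((φ n / n : ℝ) : EReal)) atTop := by
            have hev : ∀ᶠ n in atTop,
                (((α + ((Lfun n - 1 : ℕ) : ℝ) ^ (Lfun n) / (Lfun n : ℝ) ^ (Lfun n)) : ℝ) : EReal)
                  ≤ ((φ n / n : ℝ) : EReal) := by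
              filter_upwards [eventually_ge_atTop 1] with n hn
              set l := Lfun n with hl_def
              have h2 : 2 ≤ l := Lfun_two n
              have hlt : n < l ^ l := Lfun_lt n
              have hge : (l - 1) ^ (l - 1) ≤ n := Lfun_lower hn
              have hn0 : (n : ℝ) ≠ 0 := by exact_mod_cast Nat.one_le_iff_ne_zero.mp hn
              rw [EReal.coe_le_coe_iff, hφ l h2 n hge hlt, add_div,
                mul_div_cancel_left₀ _ hn0]
              have hA : (0:ℝ) ≤ ((l - 1 : ℕ) : ℝ) ^ l := by positivity
              have hnpos : (0:ℝ) < (n : ℝ) := by exact_mod_cast Nat.pos_of_ne_zero (by omega)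
              have hnle : (n : ℝ) ≤ (l : ℝ) ^ l := by
                have := hlt.le
                exact_mod_cast this
              gcongr
            exact liminf_le_liminf hev
  · -- limsup = ⊤
    rw [← top_le_iff]
    set s : ℕ → ℕ := fun l => (l - 1) ^ (l - 1) with hs_def
    have hs : Tendsto s atTop atTop := by
      apply tendsto_atTop_atTop.mpr
      intro b
      refine ⟨b + 2, fun l hl => ?_⟩
      have := Nat.le_self_pow (show l - 1 ≠ 0 by omega) (l - 1)
      simp only [hs_def]
      omega
    have hcomp : Tendsto (fun l => ((φ (s l) / (s l) : ℝ) : EReal)) atTop (nhds (⊤ : EReal)) := by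
      rw [EReal.tendsto_nhds_top_iff_real]
      intro x
      have hreal : Tendsto (fun l : ℕ => α + ((l - 1 : ℕ) : ℝ)) atTop atTop := by
        apply tendsto_atTop_add_const_left
        exact tendsto_natCast_atTop_atTop.comp (tendsto_sub_atTop_nat 1)
      filter_upwards [hreal.eventually_gt_atTop x, eventually_ge_atTop 2] with l hlx hl
      have hb := hblock l hl
      have h1 : (l - 1) ^ (l - 1) ≤ s l := le_rfl
      have h2 : s l < l ^ l := hb
      have hbase : ((l - 1 : ℕ) : ℝ) ≠ 0 := by
        have : 1 ≤ l - 1 := by omega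
        exact_mod_cast Nat.one_le_iff_ne_zero.mp this
      have hsl : (s l : ℝ) = ((l - 1 : ℕ) : ℝ) ^ (l - 1) := by
        simp only [hs_def]; push_cast; ring
      have hpne : ((l - 1 : ℕ) : ℝ) ^ (l - 1) ≠ 0 := pow_ne_zero _ hbase
      have hsl0 : (s l : ℝ) ≠ 0 := by rw [hsl]; exact hpne
      have hpow : ((l - 1 : ℕ) : ℝ) ^ l = ((l - 1 : ℕ) : ℝ) ^ (l - 1) * ((l - 1 : ℕ) : ℝ) := by
        have h := pow_succ ((l - 1 : ℕ) : ℝ) (l - 1)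
        rwa [show l - 1 + 1 = l by omega] at h
      have hval : φ (s l) / (s l) = α + ((l - 1 : ℕ) : ℝ) := by
        rw [hφ l hl (s l) h1 h2, add_div, mul_div_cancel_left₀ _ hsl0, hpow, hsl,
          mul_div_cancel_left₀ _ hpne]
      rw [hval]
      exact_mod_cast EReal.coe_lt_coe_iff.mpr hlx
    calc (⊤ : EReal) = limsup (fun l => ((φ (s l) / (s l) : ℝ) : EReal)) atTop :=
          hcomp.limsup_eq.symm
      _ = limsup (fun n => ((φ n / n : ℝ) : EReal)) (map s atTop) := limsup_comp _ _ _
      _ ≤ limsup (fun n => ((φ n / n : ℝ) : EReal)) atTop := limsup_le_limsup_of_le hs
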